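/- arXiv:1104.0323 — 7 statements merged into one kernel-verified Lean document; each statement's English description precedes it below -/
import Mathlib

section
/- Let p ∈ ℕ^m (m ≥ 1) and q ∈ ℕ^n with Σ_i p_i = Σ_j q_j, let b = max_j q_j, and let r = q̄ ∈ ℕ^b be the counts vector of q. Suppose that for each s ∈ C^r(p_1) a vector w_s ∈ ℕ^n is given whose counts vector equals r ⊖ s = r − s + Ls. Then N(p,q) = Σ_{s ∈ C^r(p_1)} (∏_{i=1}^b binom(r_i, s_i)) · N((p_2,…,p_m), w_s). -/
/-!
Classify the matrices by their first row, i.e. by the set `X` of columns where it is `1`;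
`X` has `p₀` elements and avoids the zero columns. Deleting the row leaves column sums
`q - 1_X`, whose counts vector is `r ⊖ s` for the type `sᵢ = #{j ∈ X | q j = i}`. Since
`N(p', ·)` is invariant under permuting columns, it only depends on the counts vector, so every
`X` of type `s` contributes `N(p', w_s)`. The sets `X` of type `s` are obtained by choosing
`sᵢ` columns independently in each level set `{q = i}`, of size `rᵢ`, whence
`∏ binom(rᵢ, sᵢ)`.
-/

/-- Number of entries of `v` equal to `i` (the counts vector of `v`, evaluated at `i`). -/
def countAt {n : ℕ} (v : Fin n → ℕ) (i : ℕ) : ℕ :=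
  (Finset.univ.filter fun j => v j = i).card

/-- Left shift of a vector in `ℕ^b`: `(Ls)_i = s_{i+1}`, with a trailing zero. -/
def shiftL {b : ℕ} (s : Fin b → ℕ) : Fin b → ℕ :=
  fun i => if h : i.val + 1 < b then s ⟨i.val + 1, h⟩ else 0

/-- `C^r(k)`: the vectors `s ∈ ℕ^b` with `∑ s = k` and `s ≤ r` componentwise. -/
def compBdd {b : ℕ} (r : Fin b → ℕ) (k : ℕ) : Finset (Fin b → ℕ) :=
  (Finset.Nat.antidiagonalTuple b k).filter fun s => ∀ i, s i ≤ r i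

/-- `N(p,q)`: the number of `m × n` binary matrices with row sums `p` and column sums `q`. -/
noncomputable def Ncount {m n : ℕ} (p : Fin m → ℕ) (q : Fin n → ℕ) : ℕ :=
  Set.ncard {A : Fin m → Fin n → ℕ |
    (∀ i j, A i j ≤ 1) ∧ (∀ i, ∑ j, A i j = p i) ∧ (∀ j, ∑ i, A i j = q j)}

open Finset

section Matrices

variable {m n : ℕ}

def binMatrices (p : Fin m → ℕ) (q : Fin n → ℕ) : Finset (Fin m → Fin n → ℕ) :=
  {A ∈ Fintype.piFinset fun _ => Fintype.piFinset fun _ => range 2 |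
    (∀ i, ∑ j, A i j = p i) ∧ ∀ j, ∑ i, A i j = q j}

lemma mem_binMatrices {p : Fin m → ℕ} {q : Fin n → ℕ} {A : Fin m → Fin n → ℕ} :
    A ∈ binMatrices p q ↔
      (∀ i j, A i j ≤ 1) ∧ (∀ i, ∑ j, A i j = p i) ∧ ∀ j, ∑ i, A i j = q j := by
  simp [binMatrices]

lemma Ncount_eq_card_binMatrices (p : Fin m → ℕ) (q : Fin n → ℕ) :
    Ncount p q = #(binMatrices p q) := by
  rw [Ncount, ← Set.ncard_coe_finset]
  congr 1
  ext A
  simp [mem_binMatrices]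

lemma Ncount_comp_perm (p : Fin m → ℕ) (q : Fin n → ℕ) (e : Equiv.Perm (Fin n)) :
    Ncount p (q ∘ e) = Ncount p q := by
  simp only [Ncount_eq_card_binMatrices]
  refine card_nbij' (fun A i j => A i (e.symm j)) (fun A i j => A i (e j)) ?_ ?_ ?_ ?_
  · intro A hA
    simp only [mem_coe, mem_binMatrices] at hA ⊢
    obtain ⟨h01, hrow, hcol⟩ := hA
    exact ⟨fun i j => h01 i _, fun i => (e.symm.sum_comp (A i)).trans (hrow i),
      fun j => by simpa using hcol (e.symm j)⟩
  · intro A hA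
    simp only [mem_coe, mem_binMatrices] at hA ⊢
    obtain ⟨h01, hrow, hcol⟩ := hA
    exact ⟨fun i j => h01 i _, fun i => (Equiv.sum_comp e (A i)).trans (hrow i),
      fun j => hcol (e j)⟩
  · intro A _
    simp
  · intro A _
    simp

end Matrices

section Counts

variable {n : ℕ}

lemma countAt_eq_zero {v : Fin n → ℕ} {i : ℕ} (h : ∀ j, v j ≠ i) : countAt v i = 0 := by
  simpa [countAt, filter_eq_empty_iff] using h

lemma sum_countAt_range (v : Fin n → ℕ) {N : ℕ} (hv : ∀ j, v j < N) :
    ∑ i ∈ range N, countAt v i = n := by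
  simpa [countAt] using
    (card_eq_sum_card_fiberwise (s := univ) (t := range N) (f := v) (by simpa using hv)).symm

lemma countAt_zero_eq_of_countAt_pos_eq {q q' : Fin n → ℕ}
    (h : ∀ i, 0 < i → countAt q i = countAt q' i) : countAt q 0 = countAt q' 0 := by
  set N := univ.sup q + univ.sup q'
  have hq := sum_countAt_range q (N := N + 1) fun j => by
    have := le_sup (f := q) (mem_univ j); omega
  have hq' := sum_countAt_range q' (N := N + 1) fun j => by
    have := le_sup (f := q') (mem_univ j); omega
  rw [sum_range_succ'] at hq hq'
  have : ∑ i ∈ range N, countAt q (i + 1) = ∑ i ∈ range N, countAt q' (i + 1) :=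
    sum_congr rfl fun i _ => h _ i.succ_pos
  omega

lemma exists_perm_eq_comp_of_countAt_eq {q q' : Fin n → ℕ}
    (h : ∀ i, countAt q i = countAt q' i) :
    ∃ e : Equiv.Perm (Fin n), q' = q ∘ e :=
  ⟨Equiv.ofFiberEquiv fun i => Fintype.equivOfCardEq <| by
      simpa [Fintype.card_subtype, countAt] using (h i).symm,
    funext fun j => (Equiv.ofFiberEquiv_map _ j).symm⟩

lemma Ncount_eq_of_countAt_pos_eq {m : ℕ} (p : Fin m → ℕ) {q q' : Fin n → ℕ}
    (h : ∀ i, 0 < i → countAt q i = countAt q' i) : Ncount p q = Ncount p q' := by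
  have hall (i : ℕ) : countAt q i = countAt q' i := by
    rcases i.eq_zero_or_pos with rfl | hi
    exacts [countAt_zero_eq_of_countAt_pos_eq h, h i hi]
  obtain ⟨e, rfl⟩ := exists_perm_eq_comp_of_countAt_eq hall
  exact (Ncount_comp_perm p q e).symm

end Counts

section Rows

variable {n : ℕ}

def rowOf (X : Finset (Fin n)) : Fin n → ℕ := fun j => if j ∈ X then 1 else 0

lemma sum_rowOf (X : Finset (Fin n)) : ∑ j, rowOf X j = #X := by
  simp [rowOf]

lemma eq_rowOf_of_le_one {x : Fin n → ℕ} (hx : ∀ j, x j ≤ 1) : x = rowOf {j | x j = 1} := by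
  funext j
  have := hx j
  simp only [rowOf, mem_filter, mem_univ, true_and]
  split_ifs <;> omega

lemma filter_firstRow_mem_powersetCard {m : ℕ} {p : Fin (m + 1) → ℕ} {q : Fin n → ℕ}
    {A : Fin (m + 1) → Fin n → ℕ} (hA : A ∈ binMatrices p q) :
    ({j | A 0 j = 1} : Finset (Fin n)) ∈
      ({j | q j ≠ 0} : Finset (Fin n)).powersetCard (p 0) := by
  obtain ⟨h01, hrow, hcol⟩ := mem_binMatrices.mp hA
  refine mem_powersetCard.mpr ⟨fun j hj => ?_, ?_⟩
  · simp only [mem_filter, mem_univ, true_and] at hj ⊢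
    have := single_le_sum (f := fun i => A i j) (fun i _ => Nat.zero_le _) (mem_univ 0)
    rw [hcol j] at this
    omega
  · rw [← sum_rowOf, ← eq_rowOf_of_le_one (h01 0), hrow 0]

lemma card_filter_firstRow_eq {m : ℕ} (p : Fin (m + 1) → ℕ) (q : Fin n → ℕ)
    {X : Finset (Fin n)}
    (hX : X ∈ ({j | q j ≠ 0} : Finset (Fin n)).powersetCard (p 0)) :
    #{A ∈ binMatrices p q | ({j | A 0 j = 1} : Finset (Fin n)) = X} =
      #(binMatrices (p ∘ Fin.succ) (q - rowOf X)) := by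
  obtain ⟨hXq, hXp⟩ := mem_powersetCard.mp hX
  have hXq' (j : Fin n) (hj : j ∈ X) : 0 < q j := by
    have := hXq hj
    simp only [mem_filter, mem_univ, true_and] at this
    omega
  refine card_nbij' (· ∘ Fin.succ) (fun B => Fin.cons (rowOf X) B) ?_ ?_ ?_
    fun B _ => Fin.tail_cons _ _
  · intro A hA
    simp only [mem_coe, mem_filter, mem_binMatrices] at hA ⊢
    obtain ⟨⟨h01, hrow, hcol⟩, rfl⟩ := hA
    refine ⟨fun i j => h01 _ j, fun i => hrow _, fun j => ?_⟩
    have := hcol j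
    rw [Fin.sum_univ_succ, eq_rowOf_of_le_one (h01 0)] at this
    simp only [Function.comp_apply, Pi.sub_apply]
    omega
  · intro B hB
    simp only [mem_coe, mem_filter, mem_binMatrices] at hB ⊢
    obtain ⟨h01, hrow, hcol⟩ := hB
    refine ⟨⟨fun i j => ?_, fun i => ?_, fun j => ?_⟩, by ext j; simp [rowOf]⟩
    · cases i using Fin.cases
      · simp only [Fin.cons_zero, rowOf]; split_ifs <;> omega
      · simpa using h01 _ j
    · cases i using Fin.cases
      · simpa [sum_rowOf] using hXp
      · simpa using hrow _
    · have hj := hcol j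
      simp only [Fin.sum_univ_succ, Fin.cons_zero, Fin.cons_succ, Pi.sub_apply, rowOf] at hj ⊢
      by_cases hjX : j ∈ X
      · simp only [hjX, if_true] at hj ⊢
        have := hXq' j hjX
        omega
      · simpa [hjX] using hj
  · intro A hA
    simp only [mem_coe, mem_filter, mem_binMatrices] at hA
    obtain ⟨⟨h01, -, -⟩, rfl⟩ := hA
    rw [← eq_rowOf_of_le_one (h01 0)]
    exact Fin.cons_self_tail A

lemma Ncount_succ {m : ℕ} (p : Fin (m + 1) → ℕ) (q : Fin n → ℕ) :
    Ncount p q = ∑ X ∈ ({j | q j ≠ 0} : Finset (Fin n)).powersetCard (p 0),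
      Ncount (p ∘ Fin.succ) (q - rowOf X) := by
  rw [Ncount_eq_card_binMatrices,
    card_eq_sum_card_fiberwise fun A hA => mem_coe.mpr (filter_firstRow_mem_powersetCard hA)]
  exact sum_congr rfl fun X hX => by
    rw [card_filter_firstRow_eq p q hX, Ncount_eq_card_binMatrices]

lemma countAt_sub_rowOf_succ (q : Fin n → ℕ) (X : Finset (Fin n)) (k : ℕ) :
    countAt (q - rowOf X) (k + 1) + #{j ∈ X | q j = k + 1} =
      countAt q (k + 1) + #{j ∈ X | q j = k + 2} := by
  simp only [countAt, card_filter]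
  rw [← univ_inter X, ← sum_ite_mem, ← sum_ite_mem, ← sum_add_distrib, ← sum_add_distrib]
  refine sum_congr rfl fun j _ => ?_
  simp only [Pi.sub_apply, rowOf, univ_inter]
  split_ifs <;> omega

end Rows

lemma biUnion_filter_eq_of_subset_fiber {α ι : Type*} [Fintype ι] [DecidableEq α]
    [DecidableEq ι] {g : α → ι} {T : ι → Finset α} (hT : ∀ i, ∀ a ∈ T i, g a = i)
    (i : ι) :
    {a ∈ univ.biUnion T | g a = i} = T i := by
  ext a
  simp only [mem_filter, mem_biUnion, mem_univ, true_and]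
  constructor
  · rintro ⟨⟨i', ha⟩, rfl⟩
    rwa [hT i' a ha]
  · exact fun ha => ⟨⟨i, ha⟩, hT i a ha⟩

theorem card_eq_prod_choose_of_mem_iff {α ι : Type*} [Fintype α] [Fintype ι] [DecidableEq α]
    [DecidableEq ι] (g : α → ι) (s : ι → ℕ) {t : Finset (Finset α)}
    (ht : ∀ X, X ∈ t ↔ ∀ i, #{a ∈ X | g a = i} = s i) :
    #t = ∏ i, (#{a | g a = i}).choose (s i) := by
  simp_rw [← card_powersetCard, ← Fintype.card_piFinset]
  have hT {T : ι → Finset α}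
      (hT : T ∈ Fintype.piFinset fun i => powersetCard (s i) {a | g a = i}) (i : ι) :
      #(T i) = s i ∧ ∀ a ∈ T i, g a = i := by
    obtain ⟨hsub, hcard⟩ := mem_powersetCard.mp (Fintype.mem_piFinset.mp hT i)
    exact ⟨hcard, fun a ha => by simpa using hsub ha⟩
  refine card_nbij' (fun X i => {a ∈ X | g a = i}) (fun T => univ.biUnion T) ?_ ?_ ?_ ?_
  · intro X hX
    rw [mem_coe, ht] at hX
    simp only [mem_coe, Fintype.mem_piFinset, mem_powersetCard]
    exact fun i => ⟨filter_subset_filter _ (subset_univ X), hX i⟩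
  · intro T hTmem
    rw [mem_coe, ht]
    intro i
    rw [biUnion_filter_eq_of_subset_fiber (fun i => (hT hTmem i).2), (hT hTmem i).1]
  · intro X _
    ext a
    simp
  · intro T hTmem
    exact funext (biUnion_filter_eq_of_subset_fiber fun i => (hT hTmem i).2)

section RowType

variable {n b : ℕ} {q : Fin n → ℕ}

def rowType (b : ℕ) (q : Fin n → ℕ) (X : Finset (Fin n)) : Fin b → ℕ :=
  fun i => #{j ∈ X | q j = i + 1}

lemma subset_filter_ne_zero_iff (X : Finset (Fin n)) :
    X ⊆ ({j | q j ≠ 0} : Finset (Fin n)) ↔ #{j ∈ X | q j = 0} = 0 := by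
  simp [subset_iff, filter_eq_empty_iff]

lemma card_eq_card_filter_zero_add_sum_rowType (hqb : ∀ j, q j ≤ b) (X : Finset (Fin n)) :
    #X = #{j ∈ X | q j = 0} + ∑ i, rowType b q X i := by
  rw [card_eq_sum_card_fiberwise (f := q) (t := range (b + 1))
      fun j _ => by simpa [Nat.lt_succ_iff] using hqb j,
    sum_range_succ', ← Fin.sum_univ_eq_sum_range (fun i => #{j ∈ X | q j = i + 1}), add_comm]
  rfl

lemma rowType_mem_compBdd {r : Fin b → ℕ} (hr : ∀ i : Fin b, r i = countAt q (i + 1))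
    (hqb : ∀ j, q j ≤ b) {k : ℕ} {X : Finset (Fin n)}
    (hX : X ∈ ({j | q j ≠ 0} : Finset (Fin n)).powersetCard k) :
    rowType b q X ∈ compBdd r k := by
  obtain ⟨hXq, rfl⟩ := mem_powersetCard.mp hX
  refine mem_filter.mpr ⟨?_, fun i => ?_⟩
  · rw [Nat.mem_antidiagonalTuple, card_eq_card_filter_zero_add_sum_rowType hqb X,
      (subset_filter_ne_zero_iff X).mp hXq, zero_add]
  · exact (hr i).symm ▸ card_le_card (filter_subset_filter _ (subset_univ X))

lemma card_filter_rowType_eq {r : Fin b → ℕ} (hr : ∀ i : Fin b, r i = countAt q (i + 1))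
    (hqb : ∀ j, q j ≤ b) {k : ℕ} {s : Fin b → ℕ} (hs : ∑ i, s i = k) :
    #{X ∈ ({j | q j ≠ 0} : Finset (Fin n)).powersetCard k | rowType b q X = s} =
      ∏ i, (r i).choose (s i) := by
  obtain ⟨g, hg⟩ : ∃ g : Fin n → Fin (b + 1), ∀ j i, g j = i ↔ q j = i :=
    ⟨fun j => ⟨q j, Nat.lt_succ_of_le (hqb j)⟩, fun _ _ => Fin.ext_iff⟩
  have hfib0 (X : Finset (Fin n)) : #{a ∈ X | g a = 0} = #{a ∈ X | q a = 0} :=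
    congrArg card (filter_congr fun a _ => by simp [hg])
  have hfib (X : Finset (Fin n)) (i : Fin b) :
      #{a ∈ X | g a = i.succ} = #{a ∈ X | q a = i + 1} :=
    congrArg card (filter_congr fun a _ => by simp [hg])
  -- Level `0` is prescribed size `0`, which forces `X` to avoid the zero columns.
  rw [card_eq_prod_choose_of_mem_iff g (Fin.cons 0 s) fun X => ?_, Fin.prod_univ_succ]
  · simp [hfib, hr, countAt]
  simp only [mem_filter, mem_powersetCard, Fin.forall_fin_succ, Fin.cons_zero, Fin.cons_succ,
    hfib0, hfib, subset_filter_ne_zero_iff, funext_iff, rowType]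
  refine ⟨fun ⟨⟨h0, _⟩, hX⟩ => ⟨h0, hX⟩, fun ⟨h0, hX⟩ => ⟨⟨h0, ?_⟩, hX⟩⟩
  rw [card_eq_card_filter_zero_add_sum_rowType hqb X, h0, zero_add, ← hs]
  exact sum_congr rfl fun i _ => hX i

end RowType

section Removal

variable {n b : ℕ} {q : Fin n → ℕ}

lemma shiftL_rowType (hqb : ∀ j, q j ≤ b) (X : Finset (Fin n)) (i : Fin b) :
    shiftL (rowType b q X) i = #{j ∈ X | q j = i + 2} := by
  unfold shiftL
  split_ifs
  · rfl
  · refine (card_eq_zero.mpr (filter_eq_empty_iff.mpr fun j _ => ?_)).symm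
    have := hqb j
    omega

lemma countAt_sub_rowOf {r : Fin b → ℕ} (hr : ∀ i : Fin b, r i = countAt q (i + 1))
    (hqb : ∀ j, q j ≤ b) (X : Finset (Fin n)) (i : Fin b) :
    countAt (q - rowOf X) (i + 1) = r i + shiftL (rowType b q X) i - rowType b q X i := by
  have := countAt_sub_rowOf_succ q X i
  rw [hr, shiftL_rowType hqb]
  unfold rowType
  omega

lemma Ncount_sub_rowOf_eq {m : ℕ} (p : Fin m → ℕ) {r : Fin b → ℕ}
    (hr : ∀ i : Fin b, r i = countAt q (i + 1)) (hqb : ∀ j, q j ≤ b) (X : Finset (Fin n))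
    {v : Fin n → ℕ}
    (hv : ∀ i : Fin b,
      countAt v (i + 1) = r i + shiftL (rowType b q X) i - rowType b q X i)
    (hv' : ∀ i, b < i → countAt v i = 0) :
    Ncount p (q - rowOf X) = Ncount p v := by
  refine Ncount_eq_of_countAt_pos_eq p fun i hi => ?_
  obtain ⟨k, rfl⟩ := Nat.exists_eq_add_one_of_ne_zero hi.ne'
  rcases lt_or_ge k b with hk | hk
  · exact (countAt_sub_rowOf hr hqb X ⟨k, hk⟩).trans (hv ⟨k, hk⟩).symm
  · rw [hv' _ (by omega)]
    refine countAt_eq_zero fun j => ?_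
    have := hqb j
    simp only [Pi.sub_apply]
    omega

end Removal

theorem stmt0_general {m n : ℕ} (p : Fin (m + 1) → ℕ) (q : Fin n → ℕ)
    (b : ℕ) (hb : b = Finset.univ.sup q)
    (r : Fin b → ℕ) (hr : ∀ i : Fin b, r i = countAt q (i.val + 1))
    (w : (Fin b → ℕ) → (Fin n → ℕ))
    (hw : ∀ s ∈ compBdd r (p 0),
      (∀ i : Fin b, countAt (w s) (i.val + 1) = r i + shiftL s i - s i) ∧
      (∀ i : ℕ, b < i → countAt (w s) i = 0)) :
    Ncount p q =
      ∑ s ∈ compBdd r (p 0),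
        (∏ i, Nat.choose (r i) (s i)) * Ncount (p ∘ Fin.succ) (w s) := by
  have hqb (j : Fin n) : q j ≤ b := hb ▸ le_sup (mem_univ j)
  have htype := fun X hX => rowType_mem_compBdd hr hqb (k := p 0) (X := X) hX
  rw [Ncount_succ, sum_congr rfl fun X hX =>
      Ncount_sub_rowOf_eq _ hr hqb X (hw _ (htype X hX)).1 (hw _ (htype X hX)).2,
    ← sum_fiberwise_of_maps_to' htype (fun s => Ncount (p ∘ Fin.succ) (w s))]
  refine sum_congr rfl fun s hs => ?_
  rw [sum_const, smul_eq_mul,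
    card_filter_rowType_eq hr hqb (Nat.mem_antidiagonalTuple.mp (mem_filter.mp hs).1)]

theorem stmt0 {m n : ℕ} (p : Fin (m + 1) → ℕ) (q : Fin n → ℕ)
    (hsum : ∑ i, p i = ∑ j, q j)
    (b : ℕ) (hb : b = Finset.univ.sup q)
    (r : Fin b → ℕ) (hr : ∀ i : Fin b, r i = countAt q (i.val + 1))
    (w : (Fin b → ℕ) → (Fin n → ℕ))
    (hw : ∀ s ∈ compBdd r (p 0),
      (∀ i : Fin b, countAt (w s) (i.val + 1) = r i + shiftL s i - s i) ∧
      (∀ i : ℕ, b < i → countAt (w s) i = 0)) :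
    Ncount p q =
      ∑ s ∈ compBdd r (p 0),
        (∏ i, Nat.choose (r i) (s i)) * Ncount (p ∘ Fin.succ) (w s) :=
  stmt0_general p q b hb r hr w hw
end

section
/- Let u, v ∈ ℕ^n with u_j ≤ v_j for all j, and define s_i = v'_i − (v−u)'_i for i ≥ 1. Then s_i ≥ 0 for all i, Σ_{i≥1} s_i = Σ_{j=1}^n u_j, and s_i ≤ v̄_i + s_{i+1} for all i ≥ 1. -/
/-- Number of entries of `v` that are `≥ i` (the conjugate vector of `v`, evaluated at `i`). -/
def conjAt {n : ℕ} (v : Fin n → ℕ) (i : ℕ) : ℕ :=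
  (Finset.univ.filter fun j => i ≤ v j).card

theorem stmt3 {n : ℕ} (u v : Fin n → ℕ) (hu : ∀ j, u j ≤ v j)
    (s : ℕ → ℤ)
    (hs : ∀ i : ℕ, s i = (conjAt v i : ℤ) - (conjAt (fun j => v j - u j) i : ℤ)) :
    (∀ i : ℕ, 1 ≤ i → 0 ≤ s i) ∧
    (∑ᶠ i : ℕ, s i = ∑ j, (u j : ℤ)) ∧
    (∀ i : ℕ, 1 ≤ i → s i ≤ (countAt v i : ℤ) + s (i + 1)) := by
  classical
  set w : Fin n → ℕ := fun j => v j - u j with hw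
  have hle : ∀ i, conjAt w i ≤ conjAt v i := by
    intro i
    apply Finset.card_le_card
    intro j hj
    simp only [Finset.mem_filter, Finset.mem_univ, true_and] at hj ⊢
    exact le_trans hj (Nat.sub_le _ _)
  have hmono : ∀ (x : Fin n → ℕ) i, conjAt x (i + 1) ≤ conjAt x i := by
    intro x i
    apply Finset.card_le_card
    intro j hj
    simp only [Finset.mem_filter, Finset.mem_univ, true_and] at hj ⊢
    omega
  have hsplit : ∀ i, conjAt v i = countAt v i + conjAt v (i + 1) := by
    intro i
    unfold conjAt countAt
    rw [← Finset.card_union_of_disjoint]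
    · congr 1
      ext j
      simp only [Finset.mem_filter, Finset.mem_union, Finset.mem_univ, true_and]
      omega
    · rw [Finset.disjoint_left]
      intro j hj hj'
      simp only [Finset.mem_filter, Finset.mem_univ, true_and] at hj hj'
      omega
  refine ⟨?_, ?_, ?_⟩
  · intro i _
    rw [hs i]
    have := hle i
    omega
  · set M := Finset.univ.sup v with hM
    have hvle : ∀ j, v j ≤ M := fun j => Finset.le_sup (Finset.mem_univ j)
    have hzero : ∀ (x : Fin n → ℕ), (∀ j, x j ≤ M) → ∀ i, M < i → conjAt x i = 0 := by
      intro x hx i hi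
      unfold conjAt
      rw [Finset.card_eq_zero, Finset.filter_eq_empty_iff]
      intro j _
      have := hx j
      omega
    have hsupp : Function.support s ⊆ ↑(Finset.range (M + 1)) := by
      intro i hi
      simp only [Finset.coe_range, Set.mem_Iio]
      by_contra h
      apply hi
      rw [hs i, hzero v hvle i (by omega), hzero w (fun j => le_trans (Nat.sub_le _ _) (hvle j)) i (by omega)]
      simp
    rw [finsum_eq_sum_of_support_subset s hsupp]
    have hcast : ∀ (x : Fin n → ℕ) i, (conjAt x i : ℤ) = ∑ j, if i ≤ x j then (1 : ℤ) else 0 := by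
      intro x i
      unfold conjAt
      rw [Finset.card_filter]
      push_cast
      rfl
    have hrow : ∀ (x : Fin n → ℕ), (∀ j, x j ≤ M) → ∀ j,
        ∑ i ∈ Finset.range (M + 1), (if i ≤ x j then (1 : ℤ) else 0) = x j + 1 := by
      intro x hx j
      rw [Finset.sum_boole]
      have : Finset.filter (fun i => i ≤ x j) (Finset.range (M + 1)) = Finset.range (x j + 1) := by
        ext k
        simp only [Finset.mem_filter, Finset.mem_range]
        have := hx j
        omega
      rw [this, Finset.card_range]
      push_cast
      ring
    calc ∑ i ∈ Finset.range (M + 1), s i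
        = ∑ i ∈ Finset.range (M + 1), ∑ j, ((if i ≤ v j then (1 : ℤ) else 0)
            - if i ≤ w j then (1 : ℤ) else 0) := by
          refine Finset.sum_congr rfl fun i _ => ?_
          rw [hs i, hcast v i, hcast w i, ← Finset.sum_sub_distrib]
      _ = ∑ j, ∑ i ∈ Finset.range (M + 1), ((if i ≤ v j then (1 : ℤ) else 0)
            - if i ≤ w j then (1 : ℤ) else 0) := Finset.sum_comm
      _ = ∑ j, (u j : ℤ) := by
          refine Finset.sum_congr rfl fun j _ => ?_
          rw [Finset.sum_sub_distrib, hrow v hvle j,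
            hrow w (fun j => le_trans (Nat.sub_le _ _) (hvle j)) j]
          have := hu j
          simp only [hw]
          omega
  · intro i _
    rw [hs i, hs (i + 1)]
    have h1 := hsplit i
    have h2 := hmono w i
    omega
end

section
/- Let v ∈ ℕ^n, k ∈ ℕ, b = max_j v_j, and let v∧1 = (min(v_1,1),…,min(v_n,1)). For u ∈ ℕ^n with u ≤ v, define f(u) ∈ ℕ^b by f(u)_i = v'_i − (v−u)'_i. Then the image of C^{v∧1}(k) under f is exactly C^{v̄}(k) (with v̄ ∈ ℕ^b the counts vector of v), and for every s ∈ C^{v̄}(k), the number of u ∈ C^{v∧1}(k) with f(u) = s equals ∏_{i=1}^b binom(v̄_i, s_i). -/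
open Finset

lemma sumEqCard {n : ℕ} (u : Fin n → ℕ) (hu : ∀ j, u j ≤ 1) :
    ∑ j, u j = (univ.filter fun j => u j = 1).card := by
  rw [card_filter]
  refine Finset.sum_congr rfl fun j _ => ?_
  have := hu j
  interval_cases h : u j <;> simp

lemma formulaAux {n : ℕ} (v u : Fin n → ℕ) (hu : ∀ j, u j ≤ min (v j) 1) (i : ℕ) :
    conjAt v (i+1) - conjAt (fun j => v j - u j) (i+1)
      = (univ.filter fun j => u j = 1 ∧ v j = i+1).card := by
  unfold conjAt
  rw [← card_sdiff_of_subset (by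
    intro j hj
    simp only [mem_filter, mem_univ, true_and] at *
    omega)]
  congr 1
  ext j
  simp only [mem_sdiff, mem_filter, mem_univ, true_and]
  have := hu j
  omega

lemma partitionAux {n b : ℕ} (v u : Fin n → ℕ) (hvb : ∀ j, v j ≤ b)
    (hu : ∀ j, u j ≤ min (v j) 1) :
    ∑ i : Fin b, (univ.filter fun j => u j = 1 ∧ v j = i.val+1).card = ∑ j, u j := by
  rw [sumEqCard u (fun j => le_trans (hu j) (min_le_right _ _))]
  rw [← card_biUnion ?_]
  · congr 1
    ext j
    simp only [mem_biUnion, mem_univ, true_and, mem_filter]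
    constructor
    · rintro ⟨i, h2, _⟩; exact h2
    · intro h
      have h1 := hu j
      have h2 := hvb j
      exact ⟨⟨v j - 1, by omega⟩, h, by simp; omega⟩
  · intro x _ y _ hxy
    simp only [disjoint_left, mem_filter, mem_univ, true_and]
    rintro a ⟨_, h1⟩ ⟨_, h2⟩
    exact hxy (Fin.ext (by omega))

theorem stmt5 {n : ℕ} (v : Fin n → ℕ) (k : ℕ)
    (b : ℕ) (hb : b = Finset.univ.sup v)
    (vbar : Fin b → ℕ) (hvbar : ∀ i : Fin b, vbar i = countAt v (i.val + 1))
    (f : (Fin n → ℕ) → (Fin b → ℕ))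
    (hf : ∀ u : Fin n → ℕ, (∀ j, u j ≤ v j) →
      ∀ i : Fin b, f u i = conjAt v (i.val + 1) - conjAt (fun j => v j - u j) (i.val + 1)) :
    Finset.image f (compBdd (fun j => min (v j) 1) k) = compBdd vbar k ∧
    ∀ s ∈ compBdd vbar k,
      ((compBdd (fun j => min (v j) 1) k).filter fun u => f u = s).card =
        ∏ i, Nat.choose (vbar i) (s i) := by
  have hvb : ∀ j, v j ≤ b := fun j => hb ▸ Finset.le_sup (mem_univ j)
  -- the key formula for f
  have key : ∀ u : Fin n → ℕ, (∀ j, u j ≤ min (v j) 1) → ∀ i : Fin b,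
      f u i = (univ.filter fun j => u j = 1 ∧ v j = i.val+1).card := by
    intro u hu i
    rw [hf u (fun j => le_trans (hu j) (min_le_left _ _)) i]
    exact formulaAux v u hu i.val
  have hmemD : ∀ u, u ∈ compBdd (fun j => min (v j) 1) k ↔
      (∑ j, u j = k ∧ ∀ j, u j ≤ min (v j) 1) := by
    intro u
    simp [compBdd, Finset.Nat.mem_antidiagonalTuple]
  have hmemT : ∀ s : Fin b → ℕ, s ∈ compBdd vbar k ↔
      (∑ i, s i = k ∧ ∀ i, s i ≤ vbar i) := by
    intro s
    simp [compBdd, Finset.Nat.mem_antidiagonalTuple]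
  -- part 2
  have part2 : ∀ s ∈ compBdd vbar k,
      ((compBdd (fun j => min (v j) 1) k).filter fun u => f u = s).card =
        ∏ i, Nat.choose (vbar i) (s i) := by
    intro s hs
    obtain ⟨hsum, hle⟩ := (hmemT s).mp hs
    rw [Finset.card_bij' (i := fun u _ => fun i : Fin b =>
          univ.filter fun j => u j = 1 ∧ v j = i.val+1)
      (j := fun A _ => fun j : Fin n => if ∃ i, j ∈ A i then 1 else 0)
      (t := Fintype.piFinset fun i : Fin b =>
        (univ.filter fun j => v j = i.val+1).powersetCard (s i))
      ?_ ?_ ?_ ?_]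
    · rw [Fintype.card_piFinset]
      refine Finset.prod_congr rfl fun i _ => ?_
      rw [Finset.card_powersetCard, hvbar i, countAt]
    · -- maps to target
      intro u hu
      rw [mem_filter, hmemD] at hu
      obtain ⟨⟨hsum', hub⟩, hfu⟩ := hu
      rw [Fintype.mem_piFinset]
      intro i
      rw [mem_powersetCard]
      constructor
      · intro j hj
        simp only [mem_filter, mem_univ, true_and] at *
        exact hj.2
      · rw [← key u hub i, hfu]
    · -- backward maps in
      intro A hA
      rw [Fintype.mem_piFinset] at hA
      have hAsub : ∀ i j, j ∈ A i → v j = i.val + 1 := by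
        intro i j hj
        have := (mem_powersetCard.mp (hA i)).1 hj
        simpa using this
      have hucard : ∀ i, (A i).card = s i := fun i => (mem_powersetCard.mp (hA i)).2
      set u : Fin n → ℕ := fun j => if ∃ i, j ∈ A i then 1 else 0 with hudef
      have hub : ∀ j, u j ≤ min (v j) 1 := by
        intro j
        simp only [hudef]
        split
        · next h =>
          obtain ⟨i, hi⟩ := h
          have := hAsub i j hi
          omega
        · omega
      have hSA : ∀ i : Fin b, (univ.filter fun j => u j = 1 ∧ v j = i.val+1) = A i := by
        intro i
        ext j
        simp only [mem_filter, mem_univ, true_and, hudef]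
        constructor
        · rintro ⟨h1, h2⟩
          split at h1
          · next h =>
            obtain ⟨i', hi'⟩ := h
            have := hAsub i' j hi'
            have : i' = i := Fin.ext (by omega)
            exact this ▸ hi'
          · omega
        · intro hj
          exact ⟨if_pos ⟨i, hj⟩, hAsub i j hj⟩
      rw [mem_filter, hmemD]
      refine ⟨⟨?_, hub⟩, ?_⟩
      · rw [← partitionAux v u hvb hub]
        rw [← hsum]
        refine Finset.sum_congr rfl fun i _ => ?_
        rw [hSA i, hucard i]
      · funext i
        rw [key u hub i, hSA i, hucard i]
    · -- left inverse
      intro u hu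
      rw [mem_filter, hmemD] at hu
      obtain ⟨⟨hsum', hub⟩, hfu⟩ := hu
      funext j
      by_cases h : u j = 1
      · have h1 := hub j
        have h2 := hvb j
        have hvj : 1 ≤ v j := by have := hub j; omega
        have : ∃ i : Fin b, j ∈ univ.filter fun j' => u j' = 1 ∧ v j' = i.val+1 := by
          refine ⟨⟨v j - 1, by omega⟩, ?_⟩
          simp only [mem_filter, mem_univ, true_and]
          exact ⟨h, by omega⟩
        show (if ∃ i : Fin b, j ∈ univ.filter fun j' => u j' = 1 ∧ v j' = i.val+1 then 1 else 0) = u j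
        rw [if_pos this, h]
      · have h1 := hub j
        have hu0 : u j = 0 := by omega
        have : ¬ ∃ i : Fin b, j ∈ univ.filter fun j' => u j' = 1 ∧ v j' = i.val+1 := by
          rintro ⟨i, hi⟩
          simp only [mem_filter, mem_univ, true_and] at hi
          omega
        show (if ∃ i : Fin b, j ∈ univ.filter fun j' => u j' = 1 ∧ v j' = i.val+1 then 1 else 0) = u j
        rw [if_neg this, hu0]
    · -- right inverse
      intro A hA
      rw [Fintype.mem_piFinset] at hA
      have hAsub : ∀ i j, j ∈ A i → v j = i.val + 1 := by
        intro i j hj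
        have := (mem_powersetCard.mp (hA i)).1 hj
        simpa using this
      funext i
      ext j
      simp only [mem_filter, mem_univ, true_and]
      constructor
      · rintro ⟨h1, h2⟩
        split at h1
        · next h =>
          obtain ⟨i', hi'⟩ := h
          have := hAsub i' j hi'
          have : i' = i := Fin.ext (by omega)
          exact this ▸ hi'
        · omega
      · intro hj
        exact ⟨if_pos ⟨i, hj⟩, hAsub i j hj⟩
  refine ⟨?_, part2⟩
  apply Finset.Subset.antisymm
  · intro s hs
    obtain ⟨u, hu, rfl⟩ := Finset.mem_image.mp hs
    obtain ⟨hsum', hub⟩ := (hmemD u).mp hu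
    rw [hmemT]
    constructor
    · rw [← hsum']
      rw [← partitionAux v u hvb hub]
      exact Finset.sum_congr rfl fun i _ => (key u hub i).symm ▸ rfl
    · intro i
      rw [key u hub i, hvbar i, countAt]
      apply Finset.card_le_card
      intro j hj
      simp only [mem_filter, mem_univ, true_and] at *
      exact hj.2
  · intro s hs
    have h2 := part2 s hs
    obtain ⟨hsum, hle⟩ := (hmemT s).mp hs
    have hpos : 0 < ((compBdd (fun j => min (v j) 1) k).filter fun u => f u = s).card := by
      rw [h2]
      apply Finset.prod_pos
      intro i _
      exact Nat.choose_pos (hvbar i ▸ hle i)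
    obtain ⟨u, hu⟩ := Finset.card_pos.mp hpos
    rw [mem_filter] at hu
    exact Finset.mem_image.mpr ⟨u, hu.1, hu.2⟩
end

section
/- Let v ∈ ℕ^n, k ∈ ℕ, b = max_j v_j, and let v̄ ∈ ℕ^b be the counts vector of v. For u ∈ ℕ^n with u ≤ v, define f(u) ∈ ℕ^b by f(u)_i = v'_i − (v−u)'_i. Then the image of C^v(k) under f is exactly S = {s ∈ ℕ^b : Σ_i s_i = k and s_i ≤ v̄_i + s_{i+1} for all 1 ≤ i ≤ b, where s_{b+1} := 0}, and for every s ∈ S, the number of u ∈ C^v(k) with f(u) = s equals ∏_{i=1}^b binom(v̄_i + s_{i+1}, s_i). -/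
/-- The set `S` of `s ∈ ℕ^b` with `∑ s = k` and `s_i ≤ r_i + s_{i+1}` (where `s_{b+1} = 0`). -/
def compBddL {b : ℕ} (r : Fin b → ℕ) (k : ℕ) : Finset (Fin b → ℕ) :=
  (Finset.Nat.antidiagonalTuple b k).filter fun s => ∀ i, s i ≤ r i + shiftL s i

/-!
Put `w = v - u`, so that `f(u)_i = v'_i - w'_i`. Since `Σ_j w_j = Σ_i w'_i`, the entries of `f(u)`
sum to `Σ u = k`, and `s_i ≤ v̄_i + s_{i+1}` is just `w'_{i+1} ≤ w'_i` rewritten with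
`v'_i = v̄_i + v'_{i+1}`.

For the fibres, `w ≤ v` is determined by its level sets `{w ≥ 1} ⊇ ⋯ ⊇ {w ≥ b}`, with
`{w ≥ l} ⊆ {v ≥ l}`, and `f(u) = s` prescribes their sizes `t_l = v'_l - s_l`. Choosing the
level sets from the top down, `{w ≥ l}` is any `t_l`-subset of `{v ≥ l}` containing the already
chosen `{w ≥ l + 1}`: that is `binom(v'_l - t_{l+1}, t_l - t_{l+1}) = binom(v̄_l + s_{l+1}, s_l)`
choices, whatever the choices above. Every `s ∈ S` lies in the image because these binomial
coefficients are positive.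
-/

open Finset

section Conjugate

variable {n : ℕ}

lemma conjAt_congr {w w' : Fin n → ℕ} {l : ℕ} (h : ∀ j, l ≤ w j ↔ l ≤ w' j) :
    conjAt w l = conjAt w' l :=
  congrArg card (filter_congr fun j _ => h j)

lemma conjAt_mono {w w' : Fin n → ℕ} (h : w ≤ w') (l : ℕ) : conjAt w l ≤ conjAt w' l :=
  card_le_card (monotone_filter_right _ fun j _ hj => hj.trans (h j))

lemma conjAt_succ_le (w : Fin n → ℕ) (l : ℕ) : conjAt w (l + 1) ≤ conjAt w l :=
  card_le_card (monotone_filter_right _ fun _ _ hj => (Nat.le_succ l).trans hj)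

lemma conjAt_eq_countAt_add (w : Fin n → ℕ) (l : ℕ) :
    conjAt w l = countAt w l + conjAt w (l + 1) := by
  rw [conjAt, countAt, conjAt, ← card_union_of_disjoint (disjoint_filter.2 fun _ _ h => by omega)]
  congr 1
  ext j
  simp only [mem_union, mem_filter, mem_univ, true_and]
  omega

lemma conjAt_eq_zero {w : Fin n → ℕ} {b : ℕ} (hwb : ∀ j, w j ≤ b) :
    conjAt w (b + 1) = 0 :=
  card_eq_zero.2 (filter_eq_empty_iff.2 fun j _ => by have := hwb j; omega)

lemma sum_eq_sum_range_conjAt {w : Fin n → ℕ} {b : ℕ} (hwb : ∀ j, w j ≤ b) :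
    ∑ j, w j = ∑ l ∈ range b, conjAt w (l + 1) := by
  simp only [conjAt, card_filter]
  rw [sum_comm]
  refine sum_congr rfl fun j _ => ?_
  rw [← card_filter, show {l ∈ range b | l + 1 ≤ w j} = range (w j) by
    ext l; simp only [mem_filter, mem_range]; have := hwb j; omega, card_range]

end Conjugate

section ConjDiff

/-- With 0-based indices: `conjDiff b v u i` is `f(u)_{i+1}`. -/
def conjDiff (b : ℕ) (v u : Fin n → ℕ) : Fin b → ℕ :=
  fun i => conjAt v (i + 1) - conjAt (v - u) (i + 1)

variable {n b : ℕ} {v : Fin n → ℕ}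

lemma mem_compBdd {u : Fin n → ℕ} {k : ℕ} :
    u ∈ compBdd v k ↔ ∑ j, u j = k ∧ u ≤ v := by
  simp [compBdd, Finset.Nat.mem_antidiagonalTuple, Pi.le_def]

lemma mem_compBddL {r s : Fin b → ℕ} {k : ℕ} :
    s ∈ compBddL r k ↔ ∑ i, s i = k ∧ ∀ i, s i ≤ r i + shiftL s i := by
  simp [compBddL, Finset.Nat.mem_antidiagonalTuple]

lemma sum_conjDiff (hvb : ∀ j, v j ≤ b) {u : Fin n → ℕ} (hu : u ≤ v) :
    ∑ i, conjDiff b v u i = ∑ j, u j := by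
  have hw : ∀ j, (v - u) j ≤ b := fun j => tsub_le_self.trans (hvb j)
  simp only [conjDiff]
  rw [Fin.sum_univ_eq_sum_range (fun l => conjAt v (l + 1) - conjAt (v - u) (l + 1)),
    sum_tsub_distrib _ fun l _ => conjAt_mono tsub_le_self _, ← sum_eq_sum_range_conjAt hvb,
    ← sum_eq_sum_range_conjAt hw]
  simp only [Pi.sub_apply]
  rw [sum_tsub_distrib _ fun j _ => hu j,
    tsub_tsub_cancel_of_le (sum_le_sum fun j _ => hu j)]

lemma shiftL_conjDiff (hvb : ∀ j, v j ≤ b) (u : Fin n → ℕ) (i : Fin b) :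
    shiftL (conjDiff b v u) i = conjAt v (i + 1 + 1) - conjAt (v - u) (i + 1 + 1) := by
  unfold shiftL
  split_ifs with h
  · rfl
  · rw [show (i : ℕ) + 1 + 1 = b + 1 by omega, conjAt_eq_zero hvb, zero_tsub]

lemma conjDiff_mem_compBddL (hvb : ∀ j, v j ≤ b) {u : Fin n → ℕ} {k : ℕ}
    (hu : u ∈ compBdd v k) :
    conjDiff b v u ∈ compBddL (fun i : Fin b => countAt v (i + 1)) k := by
  obtain ⟨huk, huv⟩ := mem_compBdd.1 hu
  refine mem_compBddL.2 ⟨(sum_conjDiff hvb huv).trans huk, fun i => ?_⟩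
  rw [shiftL_conjDiff hvb]
  have := conjAt_eq_countAt_add v (i + 1)
  have := conjAt_succ_le (v - u) (i + 1)
  have := conjAt_mono (tsub_le_self : v - u ≤ v) (i + 1 + 1)
  simp only [conjDiff]
  omega

end ConjDiff

section PadZero

variable {n b : ℕ}

def padZero (s : Fin b → ℕ) (l : ℕ) : ℕ := if h : l < b then s ⟨l, h⟩ else 0

lemma padZero_val (s : Fin b → ℕ) (i : Fin b) : padZero s i = s i := by
  simp [padZero]

lemma shiftL_eq_padZero (s : Fin b → ℕ) (i : Fin b) : shiftL s i = padZero s (i + 1) := rfl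

variable {v : Fin n → ℕ} {s : Fin b → ℕ}

lemma padZero_le_countAt_add (hs : ∀ i, s i ≤ countAt v (i + 1) + shiftL s i) (l : ℕ) :
    padZero s l ≤ countAt v (l + 1) + padZero s (l + 1) := by
  by_cases hl : l < b
  · simpa [padZero, hl, shiftL] using hs ⟨l, hl⟩
  · simp [padZero, hl]

lemma padZero_le_conjAt (hs : ∀ i, s i ≤ countAt v (i + 1) + shiftL s i) (l : ℕ) :
    padZero s l ≤ conjAt v (l + 1) := by
  induction h : b - l generalizing l with
  | zero => simp [padZero, show ¬ l < b by omega]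
  | succ d ih =>
    have := padZero_le_countAt_add hs l
    have := ih (l + 1) (by omega)
    have := conjAt_eq_countAt_add v (l + 1)
    omega

end PadZero

lemma card_filter_powerset_superset {α : Type*} [DecidableEq α] {A V : Finset α} (hAV : A ⊆ V)
    {c : ℕ} (hc : #A ≤ c) :
    #{B ∈ V.powerset | A ⊆ B ∧ #B = c} = (#V - #A).choose (c - #A) := by
  rw [← card_sdiff_of_subset hAV, ← card_powersetCard]
  refine card_nbij' (· \ A) (· ∪ A) (fun B hB => ?_) (fun D hD => ?_) (fun B hB => ?_)
    (fun D hD => ?_)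
  · simp only [mem_coe, mem_filter, mem_powerset, mem_powersetCard] at hB ⊢
    exact ⟨sdiff_subset_sdiff hB.1 le_rfl, by rw [card_sdiff_of_subset hB.2.1, hB.2.2]⟩
  · simp only [mem_coe, mem_filter, mem_powerset, mem_powersetCard] at hD ⊢
    have hDA : Disjoint D A := disjoint_of_subset_left hD.1 sdiff_disjoint
    refine ⟨union_subset (hD.1.trans sdiff_subset) hAV, subset_union_right, ?_⟩
    rw [card_union_of_disjoint hDA, hD.2]
    omega
  · simp only [mem_coe, mem_filter, mem_powerset] at hB
    exact sdiff_union_of_subset hB.2.1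
  · simp only [mem_coe, mem_powersetCard] at hD
    exact union_sdiff_cancel_right (disjoint_of_subset_left hD.1 sdiff_disjoint)

section ConjFiber

variable {n : ℕ} {v : Fin n → ℕ}

/-- `t l` prescribes the size of the level set `{w ≥ l + 1}`; `A` stands for an already chosen
level set above `m`, which `{w ≥ m}` must contain. -/
def conjFiber (v : Fin n → ℕ) (m : ℕ) (t : ℕ → ℕ) (A : Finset (Fin n)) :
    Finset (Fin n → ℕ) :=
  (Fintype.piFinset fun j => range (v j + 1)).filter fun w =>
    (∀ j, w j ≤ m) ∧ (∀ j ∈ A, w j = m) ∧ ∀ l < m, conjAt w (l + 1) = t l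

variable {m : ℕ} {t : ℕ → ℕ} {A B : Finset (Fin n)} {w : Fin n → ℕ}

lemma mem_conjFiber : w ∈ conjFiber v m t A ↔
    w ≤ v ∧ (∀ j, w j ≤ m) ∧ (∀ j ∈ A, w j = m) ∧
      ∀ l < m, conjAt w (l + 1) = t l := by
  simp [conjFiber, Fintype.mem_piFinset, Pi.le_def]

lemma min_mem_conjFiber (hw : w ∈ conjFiber v (m + 1) t A)
    (hwB : ({j | m + 1 ≤ w j} : Finset (Fin n)) = B) :
    (fun j => min (w j) m) ∈ conjFiber v m t B := by
  obtain ⟨hwv, -, -, hwt⟩ := mem_conjFiber.1 hw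
  simp only [Finset.ext_iff, mem_filter, mem_univ, true_and] at hwB
  refine mem_conjFiber.2 ⟨fun j => (min_le_left _ _).trans (hwv j), fun j => min_le_right _ _,
    fun j hj => ?_, fun l hl => ?_⟩
  · have := (hwB j).2 hj
    omega
  · rw [← hwt l (by omega)]
    exact conjAt_congr fun j => by omega

lemma ite_mem_conjFiber (hAB : A ⊆ B) (hBv : ∀ j ∈ B, m + 1 ≤ v j) (hB : #B = t m)
    (hw : w ∈ conjFiber v m t B) :
    (fun j => if j ∈ B then m + 1 else w j) ∈ conjFiber v (m + 1) t A ∧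
      ({j | m + 1 ≤ if j ∈ B then m + 1 else w j} : Finset (Fin n)) = B := by
  obtain ⟨hwv, hwm, hwB, hwt⟩ := mem_conjFiber.1 hw
  have htop : ∀ j, m + 1 ≤ (if j ∈ B then m + 1 else w j) ↔ j ∈ B := fun j => by
    have := hwm j
    split_ifs with hj <;> simp [hj]; omega
  refine ⟨mem_conjFiber.2 ⟨fun j => ?_, fun j => ?_, fun j hj => by simp [hAB hj],
    fun l hl => ?_⟩, Finset.ext fun j => by simpa using htop j⟩
  · have := hwv j
    have := hBv j
    dsimp only
    split_ifs with hj <;> simp_all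
  · have := hwm j
    split_ifs <;> omega
  · rcases Nat.lt_succ_iff_lt_or_eq.1 hl with hl | rfl
    · rw [← hwt l hl]
      refine conjAt_congr fun j => ?_
      have := hwm j
      have := hwB j
      split_ifs with hj <;> simp_all
    · rw [← hB]
      exact congrArg card (Finset.ext fun j => by simpa using htop j)

lemma card_filter_conjFiber_eq_card_conjFiber (hAB : A ⊆ B) (hBv : ∀ j ∈ B, m + 1 ≤ v j)
    (hB : #B = t m) :
    #{w ∈ conjFiber v (m + 1) t A | ({j | m + 1 ≤ w j} : Finset (Fin n)) = B} =
      #(conjFiber v m t B) := by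
  refine card_nbij' (fun w j => min (w j) m) (fun w j => if j ∈ B then m + 1 else w j)
    (fun w hw => ?_) (fun w hw => ?_) (fun w hw => ?_) (fun w hw => ?_)
  all_goals simp only [mem_coe, mem_filter] at hw ⊢
  · exact min_mem_conjFiber hw.1 hw.2
  · exact ite_mem_conjFiber hAB hBv hB hw
  · obtain ⟨hw, hwB⟩ := hw
    simp only [Finset.ext_iff, mem_filter, mem_univ, true_and] at hwB
    funext j
    have := (mem_conjFiber.1 hw).2.1 j
    split_ifs with hj
    · have := (hwB j).2 hj
      omega
    · have := mt (hwB j).1 hj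
      omega
  · obtain ⟨-, hwm, hwB, -⟩ := mem_conjFiber.1 hw
    funext j
    split_ifs with hj
    · simp [hwB j hj]
    · simp [hwm j]

lemma card_conjFiber (ht : Antitone t) (hAv : ∀ j ∈ A, m ≤ v j) (hA : #A = t m) :
    #(conjFiber v m t A) =
      ∏ l ∈ range m, (conjAt v (l + 1) - t (l + 1)).choose (t l - t (l + 1)) := by
  induction m generalizing A with
  | zero =>
    rw [prod_range_zero, card_eq_one]
    refine ⟨0, Finset.ext fun w => ⟨fun hw => ?_, fun hw => ?_⟩⟩
    · exact mem_singleton.2 (funext fun j => Nat.le_zero.1 ((mem_conjFiber.1 hw).2.1 j))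
    · rw [mem_singleton.1 hw]
      exact mem_conjFiber.2
        ⟨zero_le, fun _ => le_rfl, fun _ _ => rfl, fun _ h => absurd h (Nat.not_lt_zero _)⟩
  | succ m ih =>
    set V : Finset (Fin n) := {j | m + 1 ≤ v j}
    have hAV : A ⊆ V := fun j hj => by simpa [V] using hAv j hj
    have hV : #V = conjAt v (m + 1) := rfl
    have htop : Set.MapsTo (fun w : Fin n → ℕ => ({j | m + 1 ≤ w j} : Finset (Fin n)))
        (conjFiber v (m + 1) t A) ({B ∈ V.powerset | A ⊆ B ∧ #B = t m} : Finset _) :=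
        fun w hw => by
      obtain ⟨hwv, -, hwA, hwt⟩ := mem_conjFiber.1 hw
      simp only [mem_coe, mem_filter, mem_powerset]
      exact ⟨monotone_filter_right _ fun j _ hj => hj.trans (hwv j),
        fun j hj => by simp [hwA j hj], hwt m (by omega)⟩
    rw [card_eq_sum_card_fiberwise htop, sum_congr rfl fun B hB => ?_, sum_const,
      card_filter_powerset_superset hAV (hA ▸ ht m.le_succ), smul_eq_mul, hA, hV,
      prod_range_succ, mul_comm]
    obtain ⟨hBV, hAB, hB⟩ := by simpa only [mem_filter, mem_powerset] using hB
    rw [card_filter_conjFiber_eq_card_conjFiber hAB (fun j hj => by simpa [V] using hBV hj) hB]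
    exact ih (fun j hj => by have := hBV hj; simp [V] at this; omega) hB

section Fiber

variable {n b : ℕ} {v : Fin n → ℕ} {s : Fin b → ℕ}

lemma conjDiff_tsub_eq_iff {w : Fin n → ℕ} (hw : w ≤ v)
    (hs : ∀ i : Fin b, s i ≤ conjAt v (i + 1)) :
    conjDiff b v (v - w) = s ↔ ∀ i : Fin b, conjAt w (i + 1) = conjAt v (i + 1) - s i := by
  simp only [funext_iff, conjDiff, tsub_tsub_cancel_of_le hw]
  refine forall_congr' fun i => ?_
  have := conjAt_mono hw (i + 1)
  have := hs i
  omega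

lemma mem_conjFiber_iff_conjDiff (hvb : ∀ j, v j ≤ b)
    (hs : ∀ i, s i ≤ countAt v (i + 1) + shiftL s i) {w : Fin n → ℕ} :
    w ∈ conjFiber v b (fun l => conjAt v (l + 1) - padZero s l) ∅ ↔
      w ≤ v ∧ conjDiff b v (v - w) = s := by
  have hsv : ∀ i : Fin b, s i ≤ conjAt v (i + 1) :=
    fun i => padZero_val s i ▸ padZero_le_conjAt hs i
  rw [mem_conjFiber]
  constructor
  · rintro ⟨hw, -, -, hwt⟩
    exact ⟨hw, (conjDiff_tsub_eq_iff hw hsv).2 fun i => by simpa [padZero_val] using hwt i i.2⟩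
  · rintro ⟨hw, hws⟩
    refine ⟨hw, fun j => (hw j).trans (hvb j), by simp, fun l hl => ?_⟩
    simpa [padZero, hl] using (conjDiff_tsub_eq_iff hw hsv).1 hws ⟨l, hl⟩

lemma card_filter_conjDiff_eq_card_conjFiber (hvb : ∀ j, v j ≤ b) {k : ℕ}
    (hs : s ∈ compBddL (fun i : Fin b => countAt v (i + 1)) k) :
    #{u ∈ compBdd v k | conjDiff b v u = s} =
      #(conjFiber v b (fun l => conjAt v (l + 1) - padZero s l) ∅) := by
  obtain ⟨hsk, hs⟩ := mem_compBddL.1 hs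
  refine card_nbij' (v - ·) (v - ·) (fun u h => ?_) (fun w h => ?_) (fun u h => ?_)
    (fun w h => ?_)
  all_goals simp only [mem_coe, mem_filter, mem_compBdd, mem_conjFiber_iff_conjDiff hvb hs] at h ⊢
  · rw [tsub_tsub_cancel_of_le h.1.2]
    exact ⟨tsub_le_self, h.2⟩
  · refine ⟨⟨?_, tsub_le_self⟩, h.2⟩
    rw [← sum_conjDiff hvb tsub_le_self, h.2, hsk]
  · exact tsub_tsub_cancel_of_le h.1.2
  · exact tsub_tsub_cancel_of_le h.1

lemma card_filter_conjDiff (hvb : ∀ j, v j ≤ b) {k : ℕ}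
    (hs : s ∈ compBddL (fun i : Fin b => countAt v (i + 1)) k) :
    #{u ∈ compBdd v k | conjDiff b v u = s} =
      ∏ i : Fin b, (countAt v (i + 1) + shiftL s i).choose (s i) := by
  have hs' := (mem_compBddL.1 hs).2
  have ht : Antitone fun l => conjAt v (l + 1) - padZero s l := antitone_nat_of_succ_le fun l => by
    have := padZero_le_countAt_add hs' l
    have := padZero_le_conjAt hs' (l + 1)
    have := conjAt_eq_countAt_add v (l + 1)
    omega
  rw [card_filter_conjDiff_eq_card_conjFiber hvb hs, card_conjFiber (m := b) ht (by simp)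
    (by simp [conjAt_eq_zero hvb, padZero]), ← Fin.prod_univ_eq_prod_range]
  refine prod_congr rfl fun i _ => ?_
  have hstep := padZero_le_countAt_add hs' i
  have := padZero_le_conjAt hs' i
  have := padZero_le_conjAt hs' (i + 1)
  have := conjAt_eq_countAt_add v (i + 1)
  rw [shiftL_eq_padZero, ← padZero_val s i, ← Nat.choose_symm hstep]
  congr 1 <;> omega

lemma image_conjDiff_compBdd (hvb : ∀ j, v j ≤ b) (k : ℕ) :
    (compBdd v k).image (conjDiff b v) = compBddL (fun i : Fin b => countAt v (i + 1)) k := by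
  refine Subset.antisymm (image_subset_iff.2 fun u hu => conjDiff_mem_compBddL hvb hu)
    fun s hs => ?_
  obtain ⟨u, hu⟩ : {u ∈ compBdd v k | conjDiff b v u = s}.Nonempty := by
    rw [← card_pos, card_filter_conjDiff hvb hs]
    exact prod_pos fun (i : Fin b) _ => Nat.choose_pos ((mem_compBddL.1 hs).2 i)
  exact mem_image.2 ⟨u, (mem_filter.1 hu).1, (mem_filter.1 hu).2⟩

end Fiber

theorem stmt6 {n : ℕ} (v : Fin n → ℕ) (k : ℕ)
    (b : ℕ) (hb : b = Finset.univ.sup v)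
    (vbar : Fin b → ℕ) (hvbar : ∀ i : Fin b, vbar i = countAt v (i.val + 1))
    (f : (Fin n → ℕ) → (Fin b → ℕ))
    (hf : ∀ u : Fin n → ℕ, (∀ j, u j ≤ v j) →
      ∀ i : Fin b, f u i = conjAt v (i.val + 1) - conjAt (fun j => v j - u j) (i.val + 1)) :
    Finset.image f (compBdd v k) = compBddL vbar k ∧
    ∀ s ∈ compBddL vbar k,
      ((compBdd v k).filter fun u => f u = s).card =
        ∏ i, Nat.choose (vbar i + shiftL s i) (s i) := by
  have hvb : ∀ j, v j ≤ b := hb ▸ fun j => le_sup (mem_univ j)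
  obtain rfl : vbar = fun i : Fin b => countAt v (i + 1) := funext hvbar
  have hfu : ∀ u ∈ compBdd v k, f u = conjDiff b v u :=
    fun u hu => funext (hf u (mem_compBdd.1 hu).2)
  refine ⟨(image_congr hfu).trans (image_conjDiff_compBdd hvb k), fun s hs => ?_⟩
  rw [filter_congr fun u hu => by rw [hfu u hu]]
  exact card_filter_conjDiff hvb hs
end ConjFiber
end

section
/- Let m ∈ ℕ, b ≥ 1, r ∈ ℕ^b, and k ∈ ℕ. Viewing polynomials in x_0, x_1, …, x_m over ℤ as polynomials in x_0 with coefficients in ℤ[x_1,…,x_m], the coefficient of x_0^k in ∏_{i=1}^b e_i(x_0,x_1,…,x_m)^{r_i} equals Σ_{s ∈ C^r(k)} (∏_{i=1}^b binom(r_i, s_i)) · ∏_{i=1}^b e_i(x_1,…,x_m)^{r_i − s_i + s_{i+1}}, where s_{b+1} := 0. -/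
open Multiset in
lemma aux_esymm_cons {R} [CommSemiring R] (a : R) (s : Multiset R) (n : ℕ) :
    (a ::ₘ s).esymm (n+1) = s.esymm (n+1) + a * s.esymm n := by
  simp [Multiset.esymm, Multiset.powersetCard_cons, Multiset.map_map, Function.comp_def,
    Multiset.sum_map_mul_left]

lemma aux_hom_esymm {R S F} [CommSemiring R] [CommSemiring S] [FunLike F R S]
    [RingHomClass F R S] (f : F) (s : Multiset R) (n : ℕ) :
    f (s.esymm n) = (s.map f).esymm n := by
  simp [Multiset.esymm, Multiset.powersetCard_map, map_multiset_sum, Multiset.map_map,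
    Function.comp_def, map_multiset_prod]

lemma aux_finSuccEquiv_esymm (R) [CommSemiring R] (m n : ℕ) :
    (MvPolynomial.finSuccEquiv R m) (MvPolynomial.esymm (Fin (m+1)) R (n+1)) =
      Polynomial.C (MvPolynomial.esymm (Fin m) R (n+1)) +
        Polynomial.X * Polynomial.C (MvPolynomial.esymm (Fin m) R n) := by
  rw [MvPolynomial.esymm_eq_multiset_esymm]
  rw [aux_hom_esymm (MvPolynomial.finSuccEquiv R m)]
  have huniv : (Finset.univ : Finset (Fin (m+1))).val = 0 ::ₘ Finset.univ.val.map Fin.succ := by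
    rw [Fin.univ_succ]
    simp only [Finset.cons_val, Finset.map_val]
    rfl
  rw [huniv]
  simp only [Multiset.map_cons, Multiset.map_map, Function.comp_def,
    MvPolynomial.finSuccEquiv_X_zero, MvPolynomial.finSuccEquiv_X_succ]
  rw [aux_esymm_cons]
  have hC : ∀ d : ℕ, (Multiset.map
        (fun i => Polynomial.C (MvPolynomial.X i : MvPolynomial (Fin m) R)) Finset.univ.val).esymm d
      = Polynomial.C (MvPolynomial.esymm (Fin m) R d) := by
    intro d
    rw [MvPolynomial.esymm_eq_multiset_esymm,
      aux_hom_esymm (Polynomial.C : MvPolynomial (Fin m) R →+* _), Multiset.map_map]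
    rfl
  rw [hC, hC]

lemma aux_coeff_binom_pow {R} [CommSemiring R] (A B : R) (n j : ℕ) :
    ((Polynomial.C A + Polynomial.X * Polynomial.C B) ^ n).coeff j
      = (n.choose j : R) * B ^ j * A ^ (n - j) := by
  rw [add_comm, add_pow, Polynomial.finset_sum_coeff]
  have h : ∀ t ∈ Finset.range (n+1),
      ((Polynomial.X * Polynomial.C B) ^ t * Polynomial.C A ^ (n - t)
          * (n.choose t : Polynomial R)).coeff j
      = if j = t then (n.choose j : R) * B ^ j * A ^ (n - j) else 0 := by
    intro t _
    have e : (Polynomial.X * Polynomial.C B) ^ t * Polynomial.C A ^ (n - t)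
          * (n.choose t : Polynomial R)
        = Polynomial.C (B ^ t * A ^ (n - t) * (n.choose t : R)) * Polynomial.X ^ t := by
      rw [mul_pow, ← Polynomial.C_pow, ← Polynomial.C_pow, ← Polynomial.C_eq_natCast,
        map_mul, map_mul]
      ring
    rw [e, Polynomial.coeff_C_mul, Polynomial.coeff_X_pow]
    split_ifs with h
    · subst h; ring
    · simp
  rw [Finset.sum_congr rfl h, Finset.sum_ite_eq (Finset.range (n+1)) j]
  split_ifs with h
  · rfl
  · rw [Finset.mem_range, not_lt] at h
    rw [Nat.choose_eq_zero_of_lt (by omega)]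
    simp

lemma aux_coeff_prod_fin {R} [CommSemiring R] {b : ℕ} (f : Fin b → Polynomial R) (k : ℕ) :
    (∏ i, f i).coeff k = ∑ μ ∈ Finset.Nat.antidiagonalTuple b k, ∏ i, (f i).coeff (μ i) := by
  have h1 : ((∏ i, f i : Polynomial R) : PowerSeries R) = ∏ i, ((f i : PowerSeries R)) :=
    map_prod (Polynomial.coeToPowerSeries.ringHom) f Finset.univ
  have h2 := PowerSeries.coeff_prod (fun i => ((f i : PowerSeries R))) k Finset.univ
  rw [← h1, Polynomial.coeff_coe] at h2
  rw [h2]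
  refine Finset.sum_nbij' (i := fun l => ⇑l) (j := fun μ => Finsupp.equivFunOnFinite.symm μ)
    ?_ ?_ ?_ ?_ ?_
  · intro l hl
    rw [Finset.mem_finsuppAntidiag] at hl
    rw [Finset.Nat.mem_antidiagonalTuple]
    rw [← hl.1]
  · intro μ hμ
    rw [Finset.Nat.mem_antidiagonalTuple] at hμ
    rw [Finset.mem_finsuppAntidiag]
    constructor
    · rw [← hμ]; exact (Finset.sum_congr rfl fun i _ => rfl)
    · exact Finset.subset_univ _
  · intro l _; exact Finsupp.equivFunOnFinite.symm_apply_apply l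
  · intro μ _; rfl
  · intro l _
    exact Finset.prod_congr rfl fun i _ => (Polynomial.coeff_coe _ _)

lemma aux_prod_shift {b : ℕ} {M : Type*} [CommMonoid M] (e : ℕ → M) (he0 : e 0 = 1)
    (s : Fin b → ℕ) :
    (∏ i : Fin b, e i.val ^ s i) = ∏ i : Fin b, e (i.val + 1) ^ shiftL s i := by
  set F : ℕ → M := fun j => e j ^ (if h : j < b then s ⟨j, h⟩ else 0) with hF
  have hL : (∏ i : Fin b, e i.val ^ s i) = ∏ j ∈ Finset.range b, F j := by
    rw [Finset.prod_range fun j => F j]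
    exact Finset.prod_congr rfl fun i _ => by simp [hF, i.isLt]
  have hR : (∏ i : Fin b, e (i.val + 1) ^ shiftL s i) = ∏ j ∈ Finset.range b, F (j + 1) := by
    rw [Finset.prod_range fun j => F (j+1)]
    rfl
  rw [hL, hR]
  have h1 : ∏ j ∈ Finset.range (b+1), F j = (∏ j ∈ Finset.range b, F (j+1)) * F 0 :=
    Finset.prod_range_succ' F b
  have h2 : ∏ j ∈ Finset.range (b+1), F j = (∏ j ∈ Finset.range b, F j) * F b :=
    Finset.prod_range_succ F b
  have hF0 : F 0 = 1 := by
    rcases Nat.eq_zero_or_pos b with h | h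
    · simp [hF, h]
    · simp [hF, h, he0]
  have hFb : F b = 1 := by simp [hF]
  rw [hF0, mul_one] at h1
  rw [hFb, mul_one] at h2
  rw [← h1, h2]

theorem stmt10 (m : ℕ) {b : ℕ} (hb : 1 ≤ b) (r : Fin b → ℕ) (k : ℕ) :
    Polynomial.coeff
        ((MvPolynomial.finSuccEquiv ℤ m)
          (∏ i : Fin b, MvPolynomial.esymm (Fin (m + 1)) ℤ (i.val + 1) ^ r i)) k =
      ∑ s ∈ compBdd r k,
        ((∏ i, Nat.choose (r i) (s i) : ℕ) : MvPolynomial (Fin m) ℤ) *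
          ∏ i : Fin b, MvPolynomial.esymm (Fin m) ℤ (i.val + 1) ^ (r i - s i + shiftL s i) := by
  set e : ℕ → MvPolynomial (Fin m) ℤ := fun d => MvPolynomial.esymm (Fin m) ℤ d with he
  rw [map_prod]
  simp_rw [map_pow, aux_finSuccEquiv_esymm]
  rw [aux_coeff_prod_fin]
  simp_rw [aux_coeff_binom_pow]
  -- LHS is now a sum over antidiagonalTuple; restrict to compBdd
  rw [compBdd]
  rw [← Finset.sum_filter_of_ne (p := fun s => ∀ i, s i ≤ r i)]
  · refine Finset.sum_congr rfl fun s hs => ?_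
    rw [Finset.mem_filter] at hs
    rw [Finset.prod_mul_distrib, Finset.prod_mul_distrib, Nat.cast_prod]
    have hshift : (∏ i : Fin b, e i.val ^ s i) = ∏ i : Fin b, e (i.val + 1) ^ shiftL s i :=
      aux_prod_shift e (MvPolynomial.esymm_zero _ _) s
    rw [hshift, mul_assoc, ← Finset.prod_mul_distrib]
    congr 1
    refine Finset.prod_congr rfl fun i _ => ?_
    rw [← pow_add, Nat.add_comm (shiftL s i) (r i - s i)]
  · intro s _ hne i
    by_contra hlt
    push_neg at hlt
    apply hne
    apply Finset.prod_eq_zero (Finset.mem_univ i)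
    rw [Nat.choose_eq_zero_of_lt hlt]
    simp
end

section
/- Let m ∈ ℕ, b ≥ 1, r ∈ ℕ^b, and k ∈ ℕ, and let S = {s ∈ ℕ^b : Σ_i s_i = k and s_i ≤ r_i + s_{i+1} for all 1 ≤ i ≤ b, where s_{b+1} := 0}. Viewing polynomials in x_0, x_1, …, x_m over ℤ as polynomials in x_0 with coefficients in ℤ[x_1,…,x_m], the coefficient of x_0^k in ∏_{i=1}^b h_i(x_0,x_1,…,x_m)^{r_i} equals Σ_{s ∈ S} (∏_{i=1}^b binom(r_i + s_{i+1}, s_i)) · ∏_{i=1}^b h_i(x_1,…,x_m)^{r_i − s_i + s_{i+1}}. -/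
theorem Multiset.degree_toFinsupp {σ : Type*} [DecidableEq σ] (s : Multiset σ) :
    (Multiset.toFinsupp s).degree = Multiset.card s := by
  conv_rhs => rw [← Multiset.toFinsupp_toMultiset s]
  rw [Finsupp.card_toMultiset, Finsupp.degree_apply]
  rfl

theorem Finsupp.degree_cons {n : ℕ} (k : ℕ) (μ : Fin n →₀ ℕ) :
    (Finsupp.cons k μ).degree = k + μ.degree := by
  simp [Finsupp.degree_eq_sum, Fin.sum_univ_succ]

namespace MvPolynomial

variable {σ R : Type*} [CommSemiring R]

theorem prod_map_X_eq_monomial [DecidableEq σ] (s : Multiset σ) :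
    (s.map X).prod = monomial (Multiset.toFinsupp s) (1 : R) := by
  induction s using Multiset.induction with
  | empty => simp
  | cons a s ih =>
    rw [Multiset.map_cons, Multiset.prod_cons, ih, X, monomial_mul, one_mul,
      ← Multiset.singleton_add, Multiset.toFinsupp_add, Multiset.toFinsupp_singleton]

theorem coeff_hsymm [Fintype σ] [DecidableEq σ] (n : ℕ) (μ : σ →₀ ℕ) :
    coeff μ (hsymm σ R n) = if μ.degree = n then 1 else 0 := by
  simp_rw [hsymm, prod_map_X_eq_monomial, coeff_sum, coeff_monomial]
  split_ifs with hμ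
  · have hcard : Multiset.card (Finsupp.toMultiset μ) = n := by
      rw [← hμ, ← Multiset.degree_toFinsupp, Finsupp.toMultiset_toFinsupp]
    rw [Fintype.sum_eq_single ⟨_, hcard⟩ fun s hs => if_neg fun h => hs ?_]
    · simp
    · exact Sym.coe_injective (by simp [← h])
  · refine Finset.sum_eq_zero fun s _ => if_neg ?_
    rintro rfl
    exact hμ ((Multiset.degree_toFinsupp _).trans s.2)

theorem finSuccEquiv_hsymm_succ (m d : ℕ) :
    finSuccEquiv R m (hsymm (Fin (m + 1)) R (d + 1)) =
      Polynomial.X * finSuccEquiv R m (hsymm (Fin (m + 1)) R d) +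
        Polynomial.C (hsymm (Fin m) R (d + 1)) := by
  ext k μ
  rw [Polynomial.coeff_add, coeff_add, finSuccEquiv_coeff_coeff, coeff_hsymm, Finsupp.degree_cons,
    Polynomial.coeff_C]
  cases k with
  | zero => simp [coeff_hsymm]
  | succ k =>
    rw [Polynomial.coeff_X_mul, finSuccEquiv_coeff_coeff, coeff_hsymm, Finsupp.degree_cons,
      if_neg k.succ_ne_zero, coeff_zero, add_zero]
    simp only [add_right_comm k 1, Nat.add_right_cancel_iff]

end MvPolynomial

open Finset

section

variable {b : ℕ}

def shiftLPad (t : ℕ) (s : Fin b → ℕ) : Fin b → ℕ :=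
  fun i => (Fin.snoc s t : Fin (b + 1) → ℕ) i.succ

def compBddLPad (r : Fin b → ℕ) (t k : ℕ) : Finset (Fin b → ℕ) :=
  (Finset.Nat.antidiagonalTuple b k).filter fun s => ∀ i, s i ≤ r i + shiftLPad t s i

theorem shiftL_eq_shiftLPad_zero (s : Fin b → ℕ) : shiftL s = shiftLPad 0 s := by
  ext i
  simp [shiftL, shiftLPad, Fin.snoc]
  rfl

theorem compBddL_eq_compBddLPad_zero (r : Fin b → ℕ) (k : ℕ) :
    compBddL r k = compBddLPad r 0 k := by
  simp only [compBddL, compBddLPad, shiftL_eq_shiftLPad_zero]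

@[simp]
theorem shiftLPad_last (t : ℕ) (s : Fin (b + 1) → ℕ) : shiftLPad t s (Fin.last b) = t := by
  simp [shiftLPad, Fin.succ_last]

@[simp]
theorem shiftLPad_snoc_castSucc (t u : ℕ) (s : Fin b → ℕ) (i : Fin b) :
    shiftLPad t (Fin.snoc s u) i.castSucc = shiftLPad u s i := by
  simp only [shiftLPad, ← Fin.castSucc_succ, Fin.snoc_castSucc]

theorem mem_compBddLPad {r : Fin b → ℕ} {t k : ℕ} {s : Fin b → ℕ} :
    s ∈ compBddLPad r t k ↔ ∑ i, s i = k ∧ ∀ i, s i ≤ r i + shiftLPad t s i := by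
  simp [compBddLPad, Finset.Nat.mem_antidiagonalTuple]

theorem compBddLPad_zero (r : Fin 0 → ℕ) (t k : ℕ) :
    compBddLPad r t k = if k = 0 then {0} else ∅ := by
  cases k <;> simp [compBddLPad, Finset.Nat.antidiagonalTuple_zero_right,
    Finset.Nat.antidiagonalTuple_zero_succ]

theorem snoc_mem_compBddLPad {r : Fin (b + 1) → ℕ} {t k u : ℕ} {s : Fin b → ℕ} :
    Fin.snoc s u ∈ compBddLPad r t k ↔
      u ≤ min (r (Fin.last b) + t) k ∧ s ∈ compBddLPad (Fin.init r) u (k - u) := by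
  simp only [mem_compBddLPad, Fin.sum_univ_castSucc, Fin.forall_fin_succ', Fin.snoc_castSucc,
    Fin.snoc_last, shiftLPad_snoc_castSucc, shiftLPad_last, Fin.init]
  exact ⟨fun ⟨hsum, hs, hu⟩ => ⟨by omega, by omega, hs⟩,
    fun ⟨hu, hsum, hs⟩ => ⟨by omega, hs, by omega⟩⟩

theorem sum_compBddLPad_succ {M : Type*} [AddCommMonoid M] (r : Fin (b + 1) → ℕ)
    (t k : ℕ) (f : (Fin (b + 1) → ℕ) → M) :
    ∑ s ∈ compBddLPad r t k, f s =
      ∑ u ∈ range (min (r (Fin.last b) + t) k + 1),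
        ∑ s ∈ compBddLPad (Fin.init r) u (k - u), f (Fin.snoc s u) := by
  rw [Finset.sum_sigma']
  refine Finset.sum_nbij' (fun s => ⟨s (Fin.last b), Fin.init s⟩) (fun p => Fin.snoc p.2 p.1)
    ?_ ?_ ?_ ?_ ?_
  · intro s hs
    rw [← Fin.snoc_init_self s, snoc_mem_compBddLPad] at hs
    simpa [Nat.lt_succ_iff] using hs
  · rintro ⟨u, s⟩ hs
    simp only [mem_sigma, mem_range, Nat.lt_succ_iff] at hs
    exact snoc_mem_compBddLPad.2 hs
  · intro s _
    exact Fin.snoc_init_self s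
  · rintro ⟨u, s⟩ _
    simp
  · intro s _
    rw [Fin.snoc_init_self]

end

section

open Polynomial

theorem coeff_mul_X_mul_add_C_pow {A : Type*} [CommSemiring A] (F Q : A[X]) (a : A) (R k : ℕ) :
    (F * (X * Q + C a) ^ R).coeff k =
      ∑ u ∈ range (min R k + 1),
        (R.choose u : A) * a ^ (R - u) * (F * Q ^ u).coeff (k - u) := by
  have hterm (u : ℕ) : F * ((X * Q) ^ u * C a ^ (R - u) * (R.choose u : A[X])) =
      C ((R.choose u : A) * a ^ (R - u)) * (F * Q ^ u) * X ^ u := by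
    rw [map_mul, map_pow, map_natCast]
    ring
  simp_rw [add_pow, mul_sum, finsetSum_coeff, hterm, coeff_mul_X_pow', coeff_C_mul]
  rw [← sum_filter]
  refine sum_congr ?_ fun _ _ => rfl
  ext u
  simp only [mem_filter, mem_range]
  omega

theorem coeff_prod_pow_mul_pow {A : Type*} [CommSemiring A] {P : ℕ → A[X]} {c : ℕ → A}
    (hP_zero : P 0 = 1) (hP_succ : ∀ d, P (d + 1) = X * P d + C (c (d + 1))) {b : ℕ}
    (r : Fin b → ℕ) (t k : ℕ) :
    ((∏ i : Fin b, P (i.val + 1) ^ r i) * P b ^ t).coeff k =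
      ∑ s ∈ compBddLPad r t k, (∏ i, ((r i + shiftLPad t s i).choose (s i) : A)) *
        ∏ i : Fin b, c (i.val + 1) ^ (r i + shiftLPad t s i - s i) := by
  induction b generalizing t k with
  | zero => cases k <;> simp [hP_zero, compBddLPad_zero, coeff_one]
  | succ b ih =>
    have hsplit : (∏ i : Fin (b + 1), P (i.val + 1) ^ r i) * P (b + 1) ^ t =
        (∏ i : Fin b, P (i.val + 1) ^ Fin.init r i) *
          (X * P b + C (c (b + 1))) ^ (r (Fin.last b) + t) := by
      simp only [Fin.prod_univ_castSucc, Fin.val_castSucc, Fin.val_last, Fin.init]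
      rw [pow_add, ← hP_succ]
      ring
    rw [hsplit, coeff_mul_X_mul_add_C_pow, sum_compBddLPad_succ]
    refine sum_congr rfl fun u _ => ?_
    rw [ih, mul_sum]
    refine sum_congr rfl fun s _ => ?_
    simp only [Fin.prod_univ_castSucc, Fin.snoc_castSucc, Fin.snoc_last, shiftLPad_snoc_castSucc,
      shiftLPad_last, Fin.val_castSucc, Fin.val_last, Fin.init]
    ring

end

theorem stmt11_general (m : ℕ) {b : ℕ} (r : Fin b → ℕ) (k : ℕ) :
    Polynomial.coeff
        ((MvPolynomial.finSuccEquiv ℤ m)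
          (∏ i : Fin b, MvPolynomial.hsymm (Fin (m + 1)) ℤ (i.val + 1) ^ r i)) k =
      ∑ s ∈ compBddL r k,
        ((∏ i, Nat.choose (r i + shiftL s i) (s i) : ℕ) : MvPolynomial (Fin m) ℤ) *
          ∏ i : Fin b, MvPolynomial.hsymm (Fin m) ℤ (i.val + 1) ^ (r i + shiftL s i - s i) := by
  have key := coeff_prod_pow_mul_pow
    (P := fun d => MvPolynomial.finSuccEquiv ℤ m (MvPolynomial.hsymm (Fin (m + 1)) ℤ d))
    (c := MvPolynomial.hsymm (Fin m) ℤ) (by simp [MvPolynomial.hsymm_zero])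
    (MvPolynomial.finSuccEquiv_hsymm_succ m) r 0 k
  rw [pow_zero, mul_one] at key
  simp only [map_prod, map_pow, Nat.cast_prod, compBddL_eq_compBddLPad_zero,
    shiftL_eq_shiftLPad_zero]
  exact key

theorem stmt11 (m : ℕ) {b : ℕ} (hb : 1 ≤ b) (r : Fin b → ℕ) (k : ℕ) :
    Polynomial.coeff
        ((MvPolynomial.finSuccEquiv ℤ m)
          (∏ i : Fin b, MvPolynomial.hsymm (Fin (m + 1)) ℤ (i.val + 1) ^ r i)) k =
      ∑ s ∈ compBddL r k,
        ((∏ i, Nat.choose (r i + shiftL s i) (s i) : ℕ) : MvPolynomial (Fin m) ℤ) *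
          ∏ i : Fin b, MvPolynomial.hsymm (Fin m) ℤ (i.val + 1) ^ (r i + shiftL s i - s i) :=
  stmt11_general m r k
end

section
/- Let p ∈ ℕ^m and q ∈ ℕ^n with Σ_i p_i = Σ_j q_j, let b = max_j q_j, and let 1 ≤ j ≤ m. Suppose r^1 = q̄ ∈ ℕ^b (the counts vector of q), and for each 1 ≤ i ≤ j−1 suppose s^i ∈ C^{r^i}(p_i) and r^{i+1} = r^i − s^i + L s^i, where L is the left shift (Lr)_k = r_{k+1} with trailing zero. Then W(r^j) = Σ_{i=j}^m p_i, where W(r) = Σ_{k=1}^b k·r_k. -/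
lemma shift_sum {b : ℕ} (s : Fin b → ℕ) :
    ∑ k : Fin b, (k.val + 1) * shiftL s k = ∑ k : Fin b, k.val * s k := by
  cases b with
  | zero => simp
  | succ b' =>
    rw [Fin.sum_univ_castSucc (f := fun k => (k.val + 1) * shiftL s k),
      Fin.sum_univ_succ (f := fun k => k.val * s k)]
    simp only [shiftL, Fin.coe_castSucc, Fin.val_last, Fin.val_succ, Fin.val_zero,
      Nat.zero_mul, Nat.zero_add]
    have h1 : ¬ (b' + 1 < b' + 1) := by omega
    rw [dif_neg h1]
    simp only [Nat.mul_zero, Nat.add_zero]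
    apply Finset.sum_congr rfl
    intro k _
    have h2 : (k : Fin b').val + 1 < b' + 1 := by omega
    rw [dif_pos h2]
    rfl

lemma step_sum {b : ℕ} (r r' t : Fin b → ℕ) (hle : ∀ k, t k ≤ r k)
    (hr' : ∀ k, r' k = r k - t k + shiftL t k) :
    ∑ k : Fin b, (k.val + 1) * r' k + ∑ k : Fin b, t k = ∑ k : Fin b, (k.val + 1) * r k := by
  have : ∑ k : Fin b, (k.val + 1) * r' k
      = ∑ k : Fin b, (k.val + 1) * (r k - t k) + ∑ k : Fin b, k.val * t k := by
    rw [← shift_sum, ← Finset.sum_add_distrib]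
    apply Finset.sum_congr rfl
    intro k _
    rw [hr' k, Nat.mul_add]
  rw [this, Nat.add_assoc, ← Finset.sum_add_distrib, ← Finset.sum_add_distrib]
  apply Finset.sum_congr rfl
  intro k _
  obtain ⟨u, hu⟩ := Nat.exists_eq_add_of_le (hle k)
  rw [hu]
  have : t k + u - t k = u := by omega
  rw [this]
  ring

lemma base_sum {n b : ℕ} (q : Fin n → ℕ) (hb : b = Finset.univ.sup q) :
    ∑ k : Fin b, (k.val + 1) * countAt q (k.val + 1) = ∑ j, q j := by
  have : ∀ k : Fin b, (k.val + 1) * countAt q (k.val + 1)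
      = ∑ j : Fin n, if q j = k.val + 1 then q j else 0 := by
    intro k
    rw [← Finset.sum_filter]
    rw [countAt]
    rw [Finset.sum_congr rfl (fun j hj => (Finset.mem_filter.mp hj).2)]
    rw [Finset.sum_const, smul_eq_mul, Nat.mul_comm]
  rw [Finset.sum_congr rfl (fun k _ => this k), Finset.sum_comm]
  apply Finset.sum_congr rfl
  intro j _
  have hqb : q j ≤ b := hb ▸ Finset.le_sup (Finset.mem_univ j)
  by_cases h0 : q j = 0
  · simp [h0]
  · rw [Finset.sum_eq_single (⟨q j - 1, by omega⟩ : Fin b)]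
    · simp; omega
    · intro k _ hk
      rw [if_neg]
      intro hc
      exact hk (by apply Fin.ext; simp; omega)
    · intro h; exact absurd (Finset.mem_univ _) h

theorem stmt13 {m n : ℕ} (p : Fin m → ℕ) (q : Fin n → ℕ)
    (hsum : ∑ i, p i = ∑ j, q j)
    (b : ℕ) (hb : b = Finset.univ.sup q)
    (j : ℕ) (hj1 : 1 ≤ j) (hjm : j ≤ m)
    (r : ℕ → Fin b → ℕ) (s : ℕ → Fin b → ℕ)
    (hr1 : ∀ i : Fin b, r 1 i = countAt q (i.val + 1))
    (hs : ∀ i : ℕ, (hi1 : 1 ≤ i) → (hi2 : i ≤ j - 1) →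
      s i ∈ compBdd (r i) (p ⟨i - 1, by omega⟩) ∧
      ∀ k : Fin b, r (i + 1) k = r i k - s i k + shiftL (s i) k) :
    ∑ k : Fin b, (k.val + 1) * r j k =
      ∑ i ∈ Finset.univ.filter (fun i : Fin m => j ≤ i.val + 1), p i := by
  suffices claim : ∀ t : ℕ, 1 ≤ t → t ≤ j →
      ∑ k : Fin b, (k.val + 1) * r t k =
        ∑ i ∈ Finset.univ.filter (fun i : Fin m => t ≤ i.val + 1), p i from
    claim j hj1 le_rfl
  intro t
  induction t with
  | zero => omega
  | succ t ih =>
    intro _ htj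
    by_cases ht0 : t = 0
    · subst ht0
      have : (Finset.univ.filter (fun i : Fin m => 1 ≤ i.val + 1)) = Finset.univ := by
        apply Finset.filter_true_of_mem; intro i _; omega
      rw [this, hsum, ← base_sum q hb]
      apply Finset.sum_congr rfl
      intro k _
      rw [hr1 k]
    · have ht1 : 1 ≤ t := by omega
      have htj1 : t ≤ j - 1 := by omega
      obtain ⟨hmem, hrec⟩ := hs t ht1 htj1
      rw [compBdd, Finset.mem_filter, Finset.Nat.mem_antidiagonalTuple] at hmem
      obtain ⟨hsumS, hleS⟩ := hmem
      have hstep := step_sum (r t) (r (t + 1)) (s t) hleS hrec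
      rw [hsumS] at hstep
      have hIH := ih ht1 (by omega)
      have hfil : (Finset.univ.filter (fun i : Fin m => t ≤ i.val + 1))
          = insert (⟨t - 1, by omega⟩ : Fin m)
            (Finset.univ.filter (fun i : Fin m => t + 1 ≤ i.val + 1)) := by
        ext i
        simp [Fin.ext_iff]
        omega
      rw [hfil] at hIH
      rw [Finset.sum_insert (by simp; omega)] at hIH
      have hp : p (⟨t - 1, by omega⟩ : Fin m) = p ⟨t + 1 - 1 - 1, by omega⟩ := rfl
      omega
end
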